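/- arXiv:1308.4743 — 6 statements merged into one kernel-verified Lean document; each statement's English description precedes it below -/
import Mathlib

section
/- Let O_v be a valuation domain and R an O_v-algebra. Then R satisfies lying over (LO) over O_v — that is, for every prime ideal P of O_v there is a prime ideal Q of R with Q ∩ O_v = P — if and only if R is a faithful O_v-module and for every prime P of O_v, the localized algebra R_P satisfies ((R_P)^× ∩ (O_v)_P) ⊆ ((O_v)_P)^×. -/
open scoped TensorProduct

/-- A (left) ideal of a possibly noncommutative ring is two-sided. -/
def IsTwoSidedI {R : Type*} [Ring R] (Q : Ideal R) : Prop :=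
  ∀ a ∈ Q, ∀ r : R, a * r ∈ Q

/-- Primeness for two-sided ideals of a possibly noncommutative ring. -/
def IsPrimeNC {R : Type*} [Ring R] (Q : Ideal R) : Prop :=
  Q ≠ ⊤ ∧ ∀ x y : R, (∀ r : R, x * r * y ∈ Q) → x ∈ Q ∨ y ∈ Q

/-!
If `Q` lies over `P`, no `a ∈ P` can become a unit in `R_P`: the left ideal of `R_P` generated by
`Q` would then be everything, and clearing denominators would put an element of `O ∖ P` into `Q`.
Since every element of `O_P` is `a / s` with `s ∉ P`, this is the unit condition on `R_P`.

Conversely, if the elements of `P` stay non-units in `R_P`, the left ideal they generate is proper,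
because over a valuation ring each of its elements has the form `w * a` with `a ∈ P`. It lies in a
maximal left ideal `M`, and the annihilator of the simple module `R_P / M` is a prime two-sided
ideal containing the central elements `P` and missing the units `O ∖ P`; its preimage in `R` lies
over `P`.
-/

section NoncommutativeIdeals

variable {A : Type*} [Ring A]

theorem IsTwoSidedI.comap {B F : Type*} [Ring B] [FunLike F A B] [RingHomClass F A B] (f : F)
    {K : Ideal B} (hK : IsTwoSidedI K) : IsTwoSidedI (K.comap f) := by
  intro a ha r
  rw [Ideal.mem_comap, map_mul]
  exact hK _ ha _

variable {M : Type*} [AddCommGroup M] [Module A M]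

theorem isTwoSidedI_annihilator : IsTwoSidedI (Module.annihilator A M) := by
  intro a ha r
  rw [Module.mem_annihilator] at ha ⊢
  intro m
  rw [mul_smul, ha]

theorem isPrimeNC_annihilator [IsSimpleModule A M] : IsPrimeNC (Module.annihilator A M) := by
  refine ⟨fun h => ?_, fun x y hxy => or_iff_not_imp_right.mpr fun hy => ?_⟩
  · have := IsSimpleModule.nontrivial A M
    exact not_subsingleton M (Module.annihilator_eq_top_iff.mp h)
  · obtain ⟨m, hm⟩ : ∃ m : M, y • m ≠ 0 := by
      simpa [Module.mem_annihilator] using hy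
    rw [Module.mem_annihilator]
    intro m'
    obtain ⟨r, rfl⟩ := Submodule.mem_span_singleton.mp
      (IsSimpleModule.span_singleton_eq_top A hm ▸ Submodule.mem_top : m' ∈ _)
    rw [← mul_smul, ← mul_smul, Module.mem_annihilator.mp (hxy r)]

theorem algebraMap_mem_annihilator_quotient {O : Type*} [CommRing O] [Algebra O A]
    {M : Ideal A} {a : O} (ha : algebraMap O A a ∈ M) :
    algebraMap O A a ∈ Module.annihilator A (A ⧸ M) := by
  rw [Module.mem_annihilator]
  rintro ⟨r⟩
  have hr : algebraMap O A a * r ∈ M := Algebra.commutes a r ▸ M.mul_mem_left r ha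
  exact (Submodule.Quotient.mk_eq_zero M).mpr hr

end NoncommutativeIdeals

section ValuationRing

variable {O A : Type*} [CommRing O] [IsDomain O] [ValuationRing O] [Ring A] [Algebra O A]

theorem exists_eq_mul_algebraMap_of_mem_span {I : Ideal O} {x : A}
    (hx : x ∈ Ideal.span (algebraMap O A '' I)) :
    ∃ a ∈ I, ∃ w : A, x = w * algebraMap O A a := by
  induction hx using Submodule.span_induction with
  | mem x hx =>
    obtain ⟨a, ha, rfl⟩ := hx
    exact ⟨a, ha, 1, (one_mul _).symm⟩
  | zero => exact ⟨0, I.zero_mem, 0, (zero_mul _).symm⟩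
  | add x y _ _ hx hy =>
    obtain ⟨a, ha, v, rfl⟩ := hx
    obtain ⟨b, hb, w, rfl⟩ := hy
    obtain ⟨c, rfl | rfl⟩ := ValuationRing.cond a b
    · refine ⟨a, ha, v + w * algebraMap O A c, ?_⟩
      rw [add_mul, mul_assoc, ← map_mul, mul_comm c]
    · refine ⟨b, hb, v * algebraMap O A c + w, ?_⟩
      rw [add_mul, mul_assoc, ← map_mul, mul_comm c]
  | smul c x _ hx =>
    obtain ⟨a, ha, w, rfl⟩ := hx
    exact ⟨a, ha, c * w, by rw [smul_eq_mul, mul_assoc]⟩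

theorem span_algebraMap_image_ne_top {I : Ideal O} (hI : ∀ a ∈ I, ¬IsUnit (algebraMap O A a)) :
    Ideal.span (algebraMap O A '' I) ≠ ⊤ := by
  intro htop
  obtain ⟨a, ha, w, hw⟩ :=
    exists_eq_mul_algebraMap_of_mem_span (htop ▸ Submodule.mem_top : (1 : A) ∈ _)
  exact hI a ha (isUnit_iff_exists.mpr ⟨w, by rw [Algebra.commutes, hw], hw.symm⟩)

theorem exists_isPrimeNC_comap_algebraMap_eq {P : Ideal O}
    (hP : ∀ a ∈ P, ¬IsUnit (algebraMap O A a)) (hPc : ∀ a ∉ P, IsUnit (algebraMap O A a)) :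
    ∃ K : Ideal A, IsTwoSidedI K ∧ IsPrimeNC K ∧ K.comap (algebraMap O A) = P := by
  obtain ⟨M, hM, hPM⟩ := Ideal.exists_le_maximal _ (span_algebraMap_image_ne_top hP)
  have : IsSimpleModule A (A ⧸ M) := isSimpleModule_iff_isCoatom.mpr hM.out
  have hK : IsPrimeNC (Module.annihilator A (A ⧸ M)) := isPrimeNC_annihilator
  refine ⟨_, isTwoSidedI_annihilator, hK, le_antisymm (fun a ha => ?_) (fun a ha => ?_)⟩
  · by_contra haP
    exact hK.1 (Ideal.eq_top_of_isUnit_mem _ ha (hPc a haP))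
  · exact algebraMap_mem_annihilator_quotient (hPM (Ideal.subset_span ⟨a, ha, rfl⟩))

end ValuationRing

section Localization

variable {O : Type*} [CommRing O] (P : Ideal O) [P.IsPrime]
  {A : Type*} [Ring A] [Algebra O A] [Algebra (Localization.AtPrime P) A]
  [IsScalarTower O (Localization.AtPrime P) A]

theorem isUnit_algebraMap_of_notMem {a : O} (ha : a ∉ P) : IsUnit (algebraMap O A a) := by
  rw [IsScalarTower.algebraMap_apply O (Localization.AtPrime P) A]
  exact ((IsLocalization.AtPrime.isUnit_to_map_iff _ P a).mpr ha).map _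

theorem forall_isUnit_of_isUnit_algebraMap_iff :
    (∀ u : Localization.AtPrime P, IsUnit (algebraMap _ A u) → IsUnit u) ↔
      ∀ a ∈ P, ¬IsUnit (algebraMap O A a) := by
  constructor
  · intro h a ha hu
    rw [IsScalarTower.algebraMap_apply O (Localization.AtPrime P) A] at hu
    exact (IsLocalization.AtPrime.isUnit_to_map_iff _ P a).mp (h _ hu) ha
  · intro h u hu
    obtain ⟨⟨a, s⟩, rfl⟩ := IsLocalization.mk'_surjective P.primeCompl u
    rw [IsLocalization.AtPrime.isUnit_mk'_iff]
    intro haP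
    have hmul : algebraMap _ A (IsLocalization.mk' (Localization.AtPrime P) a s) *
        algebraMap O A s = algebraMap O A a := by
      rw [IsScalarTower.algebraMap_apply O (Localization.AtPrime P) A,
        IsScalarTower.algebraMap_apply O (Localization.AtPrime P) A a, ← map_mul,
        IsLocalization.mk'_spec]
    exact h a haP (hmul ▸ hu.mul (isUnit_algebraMap_of_notMem P s.2))

end Localization

section BaseChange

open Algebra.TensorProduct

variable {O R : Type*} [CommRing O] [Ring R] [Algebra O R]

theorem IsPrimeNC.comap_includeRight {L : Type*} [CommRing L] [Algebra O L]
    {K : Ideal (L ⊗[O] R)} (hK : IsPrimeNC K) : IsPrimeNC (K.comap includeRight) := by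
  refine ⟨fun htop => hK.1 ?_, fun x y hxy => hK.2 _ _ fun z => ?_⟩
  · rw [Ideal.eq_top_iff_one, ← map_one includeRight, ← Ideal.mem_comap, htop]
    exact Submodule.mem_top
  · induction z using TensorProduct.induction_on with
    | zero => rw [mul_zero, zero_mul]; exact K.zero_mem
    | tmul l r =>
      have hlr : l ⊗ₜ[O] r = algebraMap L (L ⊗[O] R) l * includeRight r := by
        rw [Algebra.TensorProduct.algebraMap_apply, Algebra.algebraMap_self, RingHom.id_apply,
          includeRight_apply, tmul_mul_tmul, one_mul, mul_one]
      rw [hlr, ← mul_assoc, ← Algebra.commutes, mul_assoc, mul_assoc, ← map_mul, ← map_mul,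
        ← mul_assoc]
      exact K.mul_mem_left _ (hxy r)
    | add z w hz hw => rw [mul_add, add_mul]; exact K.add_mem hz hw

variable (P : Ideal O) [P.IsPrime]

theorem exists_smul_eq_includeRight_of_mem_map {Q : Ideal R}
    {z : Localization.AtPrime P ⊗[O] R} (hz : z ∈ Q.map includeRight) :
    ∃ s ∈ P.primeCompl, ∃ q ∈ Q, s • z = includeRight q := by
  induction hz using Submodule.span_induction with
  | mem z hz =>
    obtain ⟨q, hq, rfl⟩ := hz
    exact ⟨1, P.primeCompl.one_mem, q, hq, one_smul _ _⟩
  | zero => exact ⟨1, P.primeCompl.one_mem, 0, Q.zero_mem, by simp⟩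
  | add z w _ _ hz hw =>
    obtain ⟨s, hs, q, hq, hsq⟩ := hz
    obtain ⟨t, ht, p, hp, htp⟩ := hw
    refine ⟨t * s, P.primeCompl.mul_mem ht hs, t • q + s • p,
      Q.add_mem (Q.smul_of_tower_mem t hq) (Q.smul_of_tower_mem s hp), ?_⟩
    rw [smul_add, mul_smul, hsq, mul_comm, mul_smul, htp, map_add, map_smul, map_smul]
  | smul c z _ hz =>
    obtain ⟨s, hs, q, hq, hsq⟩ := hz
    obtain ⟨⟨r, t⟩, htr⟩ := IsLocalizedModule.surj P.primeCompl
      (TensorProduct.mk O (Localization.AtPrime P) R 1) c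
    refine ⟨t * s, P.primeCompl.mul_mem t.2 hs, r * q, Q.mul_mem_left r hq, ?_⟩
    rw [smul_eq_mul, ← smul_mul_smul_comm, ← Submonoid.smul_def, htr, hsq, map_mul]
    rfl

theorem comap_map_includeRight_le {Q : Ideal R} (hQ : Q.comap (algebraMap O R) ≤ P) :
    (Q.map includeRight).comap (algebraMap O (Localization.AtPrime P ⊗[O] R)) ≤ P := by
  intro a ha
  obtain ⟨s, hs, q, hq, hsq⟩ :=
    exists_smul_eq_includeRight_of_mem_map P (Ideal.mem_comap.mp ha)
  have hzero :
      TensorProduct.mk O (Localization.AtPrime P) R 1 (algebraMap O R (s * a) - q) = 0 := by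
    change includeRight (algebraMap O R (s * a) - q) = 0
    rw [map_sub, AlgHom.commutes, map_mul, ← Algebra.smul_def, hsq, sub_self]
  obtain ⟨t, ht⟩ := (IsLocalizedModule.eq_zero_iff P.primeCompl _).mp hzero
  rw [Submonoid.smul_def, smul_sub, sub_eq_zero] at ht
  have htsa : (t * s : O) * a ∈ P := by
    refine hQ ?_
    rw [Ideal.mem_comap, mul_assoc, map_mul, ← Algebra.smul_def, ht]
    exact Q.smul_of_tower_mem _ hq
  exact (‹P.IsPrime›.mem_or_mem htsa).resolve_left (P.primeCompl.mul_mem t.2 hs)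

theorem not_isUnit_algebraMap_of_comap_eq {Q : Ideal R} (hQ : Q.comap (algebraMap O R) = P)
    {a : O} (ha : a ∈ P) : ¬IsUnit (algebraMap O (Localization.AtPrime P ⊗[O] R) a) := by
  intro hu
  have hmem : algebraMap O (Localization.AtPrime P ⊗[O] R) a ∈ Q.map includeRight := by
    rw [← AlgHom.commutes includeRight]
    exact Ideal.mem_map_of_mem _ (hQ.ge ha)
  have hle := comap_map_includeRight_le P hQ.le
  rw [Ideal.eq_top_of_isUnit_mem _ hmem hu, Ideal.comap_top, top_le_iff] at hle
  exact ‹P.IsPrime›.ne_top hle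

end BaseChange

/-- Let `O` be a valuation domain and `R` an `O`-algebra.  Then `R`
satisfies lying over (LO) over `O` — for every prime `P` of `O` there is a prime
(two-sided) ideal `Q` of `R` with `Q ∩ O = P` — if and only if `R` is faithful over
`O` and for every prime `P` of `O` every element of `O_P` becoming invertible in
`R_P = O_P ⊗[O] R` is already invertible in `O_P`. -/
theorem stmt3 {O R : Type*} [CommRing O] [IsDomain O] [ValuationRing O]
    [Ring R] [Algebra O R] :
    (∀ P : Ideal O, P.IsPrime →
        ∃ Q : Ideal R, IsTwoSidedI Q ∧ IsPrimeNC Q ∧ Q.comap (algebraMap O R) = P) ↔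
      ((∀ a : O, algebraMap O R a = 0 → a = 0) ∧
        ∀ (P : Ideal O) (_ : P.IsPrime) (u : Localization.AtPrime P),
          IsUnit (algebraMap (Localization.AtPrime P)
              (Localization.AtPrime P ⊗[O] R) u) → IsUnit u) := by
  constructor
  · intro lyingOver
    refine ⟨fun a ha => ?_, fun P hP => ?_⟩
    · obtain ⟨Q, -, -, hQ⟩ := lyingOver ⊥ Ideal.isPrime_bot
      rw [← Ideal.mem_bot, ← hQ, Ideal.mem_comap, ha]
      exact Q.zero_mem
    · obtain ⟨Q, -, -, hQ⟩ := lyingOver P hP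
      exact (forall_isUnit_of_isUnit_algebraMap_iff P).mpr
        fun a => not_isUnit_algebraMap_of_comap_eq P hQ
  · rintro ⟨-, hUnits⟩ P hP
    obtain ⟨K, hKtwo, hKprime, hKP⟩ := exists_isPrimeNC_comap_algebraMap_eq
      ((forall_isUnit_of_isUnit_algebraMap_iff P).mp (hUnits P hP))
      fun a => isUnit_algebraMap_of_notMem P
    refine ⟨K.comap Algebra.TensorProduct.includeRight, hKtwo.comap _,
      hKprime.comap_includeRight, ?_⟩
    ext a
    rw [Ideal.mem_comap, Ideal.mem_comap, AlgHom.commutes, ← Ideal.mem_comap, hKP]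
end

section
/- Let O_v be a valuation domain with fraction field F and maximal ideal I_v, and let R be a torsion-free O_v-algebra with n = [R ⊗_{O_v} F : F] finite. Then the number of prime ideals of R lying over I_v is at most n. -/
open scoped TensorProduct

/-!
For finitely many distinct primes `Q i` over the maximal ideal, choose `e i ∉ Q i` lying in every
`Q j ⊄ Q i`. Every `O`-linear relation among the `e i` then has all its coefficients in the maximal
ideal, and over a valuation ring this forces the `1 ⊗ e i` to be linearly independent over `F`.
-/

open IsLocalRing

section ValuationRing

variable {O F M N ι : Type*} [CommRing O] [IsDomain O] [ValuationRing O]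
  [Field F] [Algebra O F] [IsFractionRing O F]
  [AddCommGroup M] [Module O M] [Module.IsTorsionFree O M]
  [AddCommGroup N] [Module O N] [Module F N] [IsScalarTower O F N]

/-- An `F`-relation among the `f (e i)` can be rescaled so that its coefficients lie in `O` and
one of them is `1`: divide by a coefficient of largest valuation. -/
theorem linearIndependent_of_sum_smul_eq_zero_imp_mem_maximalIdeal [Fintype ι]
    (f : M →ₗ[O] N) [IsLocalizedModule (nonZeroDivisors O) f] (e : ι → M)
    (he : ∀ c : ι → O, ∑ i, c i • e i = 0 → ∀ i, c i ∈ maximalIdeal O) :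
    LinearIndependent F (fun i => f (e i)) := by
  rw [Fintype.linearIndependent_iff]
  intro g hg
  by_contra! hne
  obtain ⟨i₁, hi₁⟩ := hne
  set v := ValuationRing.valuation O F
  obtain ⟨j, -, hj⟩ := Finset.univ.exists_max_image (fun i => v (g i)) ⟨i₁, Finset.mem_univ _⟩
  have hgj : g j ≠ 0 := fun h0 =>
    hi₁ <| v.zero_iff.mp <| le_zero_iff.mp <| by simpa [h0] using hj i₁ (Finset.mem_univ _)
  have hint : ∀ i, ∃ a : O, algebraMap O F a = g i / g j := fun i =>
    (ValuationRing.mem_integer_iff O F _).mp <| by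
      rw [Valuation.mem_integer_iff, map_div₀]
      exact div_le_one_of_le₀ (hj i (Finset.mem_univ _)) zero_le
  choose a ha using hint
  have haj : a j = 1 :=
    IsFractionRing.injective O F (by rw [ha, div_self hgj, map_one])
  have hsum : f (∑ i, a i • e i) = 0 := by
    have : g j • f (∑ i, a i • e i) = 0 := by
      rw [← hg, map_sum, Finset.smul_sum]
      refine Finset.sum_congr rfl fun i _ => ?_
      rw [map_smul, ← algebraMap_smul F (a i) (f (e i)), smul_smul, ha, mul_div_cancel₀ _ hgj]
    exact (smul_eq_zero.mp this).resolve_left hgj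
  have hinj : Function.Injective f :=
    (IsLocalizedModule.injective_iff_isRegular _ f).mpr fun c =>
      Module.IsTorsionFree.isSMulRegular (IsRegular.of_ne_zero (nonZeroDivisors.ne_zero c.2))
  have := he a (hinj (hsum.trans f.map_zero.symm)) j
  rw [haj] at this
  exact (maximalIdeal.isMaximal O).ne_top ((Ideal.eq_top_iff_one _).mpr this)

end ValuationRing

namespace IsPrimeNC

variable {R ι : Type*} [Ring R] {Q : Ideal R}

theorem exists_notMem_forall_mem (hQ : IsPrimeNC Q) (J : ι → Ideal R) (s : Finset ι)
    (hJ : ∀ j ∈ s, IsTwoSidedI (J j) ∧ ¬ J j ≤ Q) : ∃ x ∉ Q, ∀ j ∈ s, x ∈ J j := by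
  classical
  induction s using Finset.induction_on with
  | empty => exact ⟨1, fun h => hQ.1 ((Ideal.eq_top_iff_one Q).mpr h), by simp⟩
  | insert k s _ ih =>
    obtain ⟨x, hxQ, hxJ⟩ := ih fun j hj => hJ j (Finset.mem_insert_of_mem hj)
    obtain ⟨hJk, hJkQ⟩ := hJ k (Finset.mem_insert_self k s)
    obtain ⟨y, hyJ, hyQ⟩ := SetLike.not_le_iff_exists.mp hJkQ
    obtain ⟨r, hr⟩ : ∃ r, x * r * y ∉ Q := by
      by_contra! h
      exact (hQ.2 x y h).elim hxQ hyQ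
    refine ⟨x * r * y, hr, fun j hj => ?_⟩
    rcases Finset.mem_insert.mp hj with rfl | hj
    · exact (J j).mul_mem_left _ hyJ
    · obtain ⟨hJj, -⟩ := hJ j (Finset.mem_insert_of_mem hj)
      exact hJj _ (hJj x (hxJ j hj) r) y

theorem algebraMap_mem_or_mem_of_smul_mem {O : Type*} [CommRing O] [Algebra O R]
    (hQ : IsPrimeNC Q) {c : O} {x : R} (h : c • x ∈ Q) : algebraMap O R c ∈ Q ∨ x ∈ Q :=
  hQ.2 _ _ fun r => by
    rw [Algebra.commutes, mul_assoc, ← Algebra.smul_def]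
    exact Q.mul_mem_left r h

end IsPrimeNC

section PrimesOver

variable {O R ι : Type*} [CommRing O] [Ring R] [Algebra O R] [Fintype ι]

theorem exists_notMem_forall_mem_of_not_le (Q : ι → Ideal R)
    (hQ : ∀ i, IsTwoSidedI (Q i) ∧ IsPrimeNC (Q i)) :
    ∃ e : ι → R, ∀ i, e i ∉ Q i ∧ ∀ j, ¬ Q j ≤ Q i → e i ∈ Q j := by
  classical
  choose e he using fun i => (hQ i).2.exists_notMem_forall_mem Q
    (Finset.univ.filter fun j => ¬ Q j ≤ Q i)
    (fun j hj => ⟨(hQ j).1, (Finset.mem_filter.mp hj).2⟩)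
  exact ⟨e, fun i => ⟨(he i).1, fun j hj => (he i).2 j (by simpa using hj)⟩⟩

/-- Pick `i₀` with `c i₀ ∉ P` and `Q i₀` maximal among such: every other term of the relation
lies in `Q i₀`, hence so does `c i₀ • e i₀`, contradicting primality. -/
theorem mem_of_sum_smul_eq_zero_of_isPrimeNC {P : Ideal O} (Q : ι → Ideal R)
    (hQ : Function.Injective Q)
    (hprime : ∀ i, IsPrimeNC (Q i)) (hover : ∀ i, (Q i).comap (algebraMap O R) = P)
    (e : ι → R) (he : ∀ i, e i ∉ Q i ∧ ∀ j, ¬ Q j ≤ Q i → e i ∈ Q j)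
    (c : ι → O) (hc : ∑ i, c i • e i = 0) (i : ι) : c i ∈ P := by
  classical
  have algebraMap_mem_iff : ∀ i k, algebraMap O R (c k) ∈ Q i ↔ c k ∈ P := fun i k => by
    rw [← hover i, Ideal.mem_comap]
  by_contra hi
  set B := Finset.univ.filter fun k => c k ∉ P
  obtain ⟨i₀, hi₀B, hi₀max⟩ := B.exists_maximalFor Q ⟨i, by simpa [B] using hi⟩
  have hterm : ∀ k ≠ i₀, c k • e k ∈ Q i₀ := by
    intro k hk
    by_cases hck : c k ∈ P
    · rw [Algebra.smul_def, Algebra.commutes]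
      exact (Q i₀).mul_mem_left _ ((algebraMap_mem_iff i₀ k).mpr hck)
    · have hle : ¬ Q i₀ ≤ Q k := fun hle =>
        hk (hQ ((hi₀max (by simpa [B] using hck) hle).antisymm hle))
      exact (Q i₀).smul_of_tower_mem (c k) ((he k).2 i₀ hle)
  have hi₀ : c i₀ • e i₀ ∈ Q i₀ := by
    rw [← Finset.add_sum_erase _ _ (Finset.mem_univ i₀), add_eq_zero_iff_eq_neg] at hc
    rw [hc]
    exact (Q i₀).neg_mem ((Q i₀).sum_mem fun k hk => hterm k (Finset.ne_of_mem_erase hk))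
  rcases (hprime i₀).algebraMap_mem_or_mem_of_smul_mem hi₀ with h | h
  · exact (Finset.mem_filter.mp hi₀B).2 ((algebraMap_mem_iff i₀ i₀).mp h)
  · exact (he i₀).1 h

end PrimesOver

theorem card_le_finrank_of_isPrimeNC {O F R ι : Type*}
    [CommRing O] [IsDomain O] [ValuationRing O]
    [Field F] [Algebra O F] [IsFractionRing O F]
    [Ring R] [Algebra O R] [NoZeroSMulDivisors O R] [Module.Finite F (F ⊗[O] R)] [Fintype ι]
    (Q : ι → Ideal R) (hQ : Function.Injective Q)
    (hQover : ∀ i, IsTwoSidedI (Q i) ∧ IsPrimeNC (Q i) ∧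
      (Q i).comap (algebraMap O R) = maximalIdeal O) :
    Fintype.card ι ≤ Module.finrank F (F ⊗[O] R) := by
  obtain ⟨e, he⟩ := exists_notMem_forall_mem_of_not_le Q fun i => ⟨(hQover i).1, (hQover i).2.1⟩
  exact (linearIndependent_of_sum_smul_eq_zero_imp_mem_maximalIdeal (TensorProduct.mk O F R 1) e
    fun c hc => mem_of_sum_smul_eq_zero_of_isPrimeNC Q hQ (fun i => (hQover i).2.1)
      (fun i => (hQover i).2.2) e he c hc).fintype_card_le_finrank

/-- Let `O` be a valuation domain with fraction field `F`, maximal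
ideal `I_v`, and `R` a torsion-free `O`-algebra with `n = [R ⊗[O] F : F]` finite.
Then the set of prime ideals of `R` lying over `I_v` is finite, of size at most `n`. -/
theorem stmt7 {O F R : Type*} [CommRing O] [IsDomain O] [ValuationRing O]
    [Field F] [Algebra O F] [IsFractionRing O F]
    [Ring R] [Algebra O R] [NoZeroSMulDivisors O R]
    [Module.Finite F (F ⊗[O] R)] :
    ({Q : Ideal R | IsTwoSidedI Q ∧ IsPrimeNC Q ∧
        Q.comap (algebraMap O R) = IsLocalRing.maximalIdeal O}).Finite ∧
      ({Q : Ideal R | IsTwoSidedI Q ∧ IsPrimeNC Q ∧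
        Q.comap (algebraMap O R) = IsLocalRing.maximalIdeal O}).ncard ≤
          Module.finrank F (F ⊗[O] R) := by
  set S := {Q : Ideal R | IsTwoSidedI Q ∧ IsPrimeNC Q ∧
    Q.comap (algebraMap O R) = IsLocalRing.maximalIdeal O}
  have hfin : S.Finite := by
    by_contra hinf
    let emb := Set.Infinite.natEmbedding S hinf
    have := card_le_finrank_of_isPrimeNC (F := F)
      (fun k : Fin (Module.finrank F (F ⊗[O] R) + 1) => (emb k : Ideal R))
      (Subtype.val_injective.comp (emb.injective.comp Fin.val_injective)) fun k => (emb k).2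
    simp at this
  have := hfin.fintype
  refine ⟨hfin, ?_⟩
  rw [← Nat.card_coe_set_eq, Nat.card_eq_fintype_card]
  exact card_le_finrank_of_isPrimeNC Subtype.val Subtype.val_injective fun Q => Q.2
end

section
/- Let S be a commutative valuation ring (a commutative ring whose ideals are totally ordered by inclusion, not necessarily a domain) and let R be an S-algebra. Then R satisfies going down over S if and only if every minimal prime ideal of R lies over the (unique) minimal prime ideal of S. -/
section TwoSided

variable {R : Type*} [Ring R]

def IsMSystem (M : Set R) : Prop :=
  ∀ a ∈ M, ∀ b ∈ M, ∃ r, a * r * b ∈ M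

def Ideal.sandwichLeft (Q : Ideal R) (y : R) : Ideal R where
  carrier := {a | ∀ r, a * r * y ∈ Q}
  zero_mem' r := by simpa only [zero_mul] using Q.zero_mem
  add_mem' ha hb r := by simpa only [add_mul] using Q.add_mem (ha r) (hb r)
  smul_mem' c a ha r := by simpa only [smul_eq_mul, mul_assoc] using Q.mul_mem_left c (ha r)

def Ideal.sandwichRight (x : R) (Q : Ideal R) : Ideal R where
  carrier := {b | ∀ r, x * r * b ∈ Q}
  zero_mem' r := by simpa only [mul_zero] using Q.zero_mem
  add_mem' ha hb r := by simpa only [mul_add] using Q.add_mem (ha r) (hb r)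
  smul_mem' c b hb r := by simpa only [smul_eq_mul, mul_assoc] using hb (r * c)

theorem isTwoSidedI_sandwichLeft (Q : Ideal R) (y : R) : IsTwoSidedI (Q.sandwichLeft y) :=
  fun a ha s r => by simpa only [mul_assoc] using ha (s * r)

theorem isTwoSidedI_sandwichRight {Q : Ideal R} (hQ : IsTwoSidedI Q) (x : R) :
    IsTwoSidedI (Q.sandwichRight x) :=
  fun b hb s r => by simpa only [mul_assoc] using hQ _ (hb r) s

theorem le_sandwichLeft {Q : Ideal R} (hQ : IsTwoSidedI Q) (y : R) : Q ≤ Q.sandwichLeft y :=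
  fun a ha r => hQ _ (hQ a ha r) y

theorem le_sandwichRight (Q : Ideal R) (x : R) : Q ≤ Q.sandwichRight x :=
  fun _ hb r => Q.mul_mem_left (x * r) hb

theorem isTwoSidedI_sInf {c : Set (Ideal R)} (hc : ∀ I ∈ c, IsTwoSidedI I) :
    IsTwoSidedI (sInf c) :=
  fun a ha r => Submodule.mem_sInf.mpr fun I hI => hc I hI a (Submodule.mem_sInf.mp ha I hI) r

theorem isPrimeNC_sInf_of_isChain {c : Set (Ideal R)} (hne : c.Nonempty)
    (hchain : IsChain (· ≤ ·) c) (hc : ∀ Q ∈ c, IsPrimeNC Q) : IsPrimeNC (sInf c) := by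
  obtain ⟨Q, hQ⟩ := hne
  refine ⟨fun h => (hc Q hQ).1 (top_le_iff.mp (h ▸ sInf_le hQ)), fun x y hxy => ?_⟩
  have mem_or_mem (Q) (hQ : Q ∈ c) : x ∈ Q ∨ y ∈ Q :=
    (hc Q hQ).2 x y fun r => Submodule.mem_sInf.mp (hxy r) Q hQ
  by_contra! h
  obtain ⟨Q₁, hQ₁, hx⟩ : ∃ Q ∈ c, x ∉ Q := by simpa [Submodule.mem_sInf] using h.1
  obtain ⟨Q₂, hQ₂, hy⟩ : ∃ Q ∈ c, y ∉ Q := by simpa [Submodule.mem_sInf] using h.2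
  rcases hchain.total hQ₁ hQ₂ with hle | hle
  · exact hy (hle ((mem_or_mem Q₁ hQ₁).resolve_left hx))
  · exact hx (hle ((mem_or_mem Q₂ hQ₂).resolve_right hy))

theorem exists_minimal_isPrimeNC_le {Q : Ideal R} (hts : IsTwoSidedI Q) (hQ : IsPrimeNC Q) :
    ∃ Q₀ ≤ Q, Minimal (fun I => IsTwoSidedI I ∧ IsPrimeNC I) Q₀ :=
  zorn_le_nonempty₀ (α := (Ideal R)ᵒᵈ) {I | IsTwoSidedI I ∧ IsPrimeNC I}
    (fun c hc hchain _ hne => ⟨(sInf c : Ideal R),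
      ⟨isTwoSidedI_sInf fun _ hI => (hc hI).1,
        isPrimeNC_sInf_of_isChain ⟨_, hne⟩ hchain.symm fun _ hI => (hc hI).2⟩,
      fun _ hI => (sInf_le hI : (sInf c : Ideal R) ≤ _)⟩)
    Q ⟨hts, hQ⟩

theorem isPrimeNC_of_maximal_disjoint {M : Set R} (hM : IsMSystem M) (hne : M.Nonempty)
    {Q : Ideal R} (hQ : Maximal (fun I => IsTwoSidedI I ∧ Disjoint (I : Set R) M) Q) :
    IsPrimeNC Q := by
  obtain ⟨⟨hts, hdisj⟩, hmax⟩ := hQ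
  have meets (J : Ideal R) (hJ : IsTwoSidedI J) (hQJ : Q ≤ J) (hJQ : ¬J ≤ Q) :
      ∃ m ∈ M, m ∈ J := by
    by_contra! h
    exact hJQ (hmax ⟨hJ, Set.disjoint_left.mpr fun m hmJ hmM => h m hmM hmJ⟩ hQJ)
  obtain ⟨m, hm⟩ := hne
  refine ⟨fun htop => Set.disjoint_left.mp hdisj (htop ▸ Submodule.mem_top) hm,
    fun x y hxy => ?_⟩
  -- From `x R y ⊆ Q` with `x, y ∉ Q`, enlarging `Q` twice produces `m₁, m₂ ∈ M` with `m₁ R m₂ ⊆ Q`.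
  by_contra! h
  obtain ⟨m₁, hm₁, hm₁y⟩ := meets (Q.sandwichLeft y) (isTwoSidedI_sandwichLeft Q y)
    (le_sandwichLeft hts y) fun hle => h.1 (hle hxy)
  obtain ⟨m₂, hm₂, hm₁m₂⟩ := meets (Q.sandwichRight m₁) (isTwoSidedI_sandwichRight hts m₁)
    (le_sandwichRight Q m₁) fun hle => h.2 (hle hm₁y)
  obtain ⟨r, hr⟩ := hM m₁ hm₁ m₂ hm₂
  exact Set.disjoint_left.mp hdisj (hm₁m₂ r) hr

theorem exists_isPrimeNC_le_of_disjoint {M : Set R} (hM : IsMSystem M) (hne : M.Nonempty)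
    {I : Ideal R} (hts : IsTwoSidedI I) (hdisj : Disjoint (I : Set R) M) :
    ∃ Q, I ≤ Q ∧ IsTwoSidedI Q ∧ IsPrimeNC Q ∧ Disjoint (Q : Set R) M := by
  obtain ⟨Q, hIQ, hQ⟩ := zorn_le_nonempty₀ {J : Ideal R | IsTwoSidedI J ∧ Disjoint (J : Set R) M}
    (fun c hc hchain J hJ => by
      have mem_sSup {a} (ha : a ∈ sSup c) : ∃ J ∈ c, a ∈ J :=
        (Submodule.mem_sSup_of_directed ⟨J, hJ⟩ hchain.directedOn).mp ha
      refine ⟨sSup c, ⟨fun a ha r => ?_, Set.disjoint_left.mpr fun a ha => ?_⟩,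
        fun _ => le_sSup⟩
      · obtain ⟨J', hJ', haJ'⟩ := mem_sSup ha
        exact le_sSup hJ' ((hc hJ').1 a haJ' r)
      · obtain ⟨J', hJ', haJ'⟩ := mem_sSup ha
        exact Set.disjoint_left.mp (hc hJ').2 haJ')
    I ⟨hts, hdisj⟩
  exact ⟨Q, hIQ, hQ.1.1, isPrimeNC_of_maximal_disjoint hM hne hQ, hQ.1.2⟩

end TwoSided

section Algebra

variable {S R : Type*} [CommRing S] [Ring R] [Algebra S R]

theorem isPrime_comap_of_isPrimeNC {Q : Ideal R} (hQ : IsPrimeNC Q) :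
    (Q.comap (algebraMap S R)).IsPrime where
  ne_top' := Ideal.comap_ne_top _ hQ.1
  mem_or_mem' {a b} hab := hQ.2 _ _ fun r => by
    rw [Algebra.commutes, mul_assoc, ← map_mul]
    exact Q.mul_mem_left r hab

def complMul (P : Ideal S) (Q : Ideal R) : Set R :=
  {z | ∃ s ∉ P, ∃ t ∉ Q, z = algebraMap S R s * t}

theorem isMSystem_complMul {P : Ideal S} (hP : P.IsPrime) {Q : Ideal R} (hQ : IsPrimeNC Q) :
    IsMSystem (complMul P Q) := by
  rintro _ ⟨s₁, hs₁, t₁, ht₁, rfl⟩ _ ⟨s₂, hs₂, t₂, ht₂, rfl⟩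
  obtain ⟨r, hr⟩ : ∃ r, t₁ * r * t₂ ∉ Q := by
    by_contra! h
    exact (hQ.2 t₁ t₂ h).elim ht₁ ht₂
  refine ⟨r, s₁ * s₂, fun h => (hP.mem_or_mem h).elim hs₁ hs₂, t₁ * r * t₂, hr, ?_⟩
  simp only [map_mul, mul_assoc]
  rw [Algebra.left_comm r s₂, Algebra.left_comm t₁ s₂]

theorem mem_map_algebraMap_iff [PreValuationRing S] {P : Ideal S} {y : R} :
    y ∈ P.map (algebraMap S R) ↔ ∃ p ∈ P, ∃ x, y = algebraMap S R p * x := by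
  refine ⟨fun hy => ?_, ?_⟩
  · induction hy using Submodule.span_induction with
    | mem _ h =>
      obtain ⟨p, hp, rfl⟩ := h
      exact ⟨p, hp, 1, (mul_one _).symm⟩
    | zero => exact ⟨0, P.zero_mem, 0, by simp⟩
    | add _ _ _ _ h₁ h₂ =>
      obtain ⟨p, hp, x, rfl⟩ := h₁
      obtain ⟨q, hq, x', rfl⟩ := h₂
      obtain ⟨u, rfl⟩ | ⟨u, rfl⟩ := ValuationRing.dvd_total p q
      · exact ⟨p, hp, x + algebraMap S R u * x', by rw [map_mul, mul_add, mul_assoc]⟩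
      · exact ⟨q, hq, algebraMap S R u * x + x', by rw [map_mul, mul_add, mul_assoc]⟩
    | smul c _ _ h =>
      obtain ⟨p, hp, x, rfl⟩ := h
      exact ⟨p, hp, c * x, Algebra.left_comm c p x⟩
  · rintro ⟨p, hp, x, rfl⟩
    rw [Algebra.commutes]
    exact Ideal.mul_mem_left _ x (Ideal.mem_map_of_mem _ hp)

theorem disjoint_map_complMul [PreValuationRing S] {P : Ideal S} (hP : P.IsPrime)
    {Q₀ Q : Ideal R} (hQ₀ : IsPrimeNC Q₀) (hQ₀Q : Q₀ ≤ Q)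
    (hQ₀P : Q₀.comap (algebraMap S R) ≤ P) (hPQ : P ≤ Q.comap (algebraMap S R)) :
    Disjoint (P.map (algebraMap S R) : Set R) (complMul P Q) := by
  refine Set.disjoint_right.mpr ?_
  rintro _ ⟨s, hs, t, ht, rfl⟩ hmem
  obtain ⟨p, hp, x, hpx⟩ := mem_map_algebraMap_iff.mp hmem
  obtain ⟨u, rfl⟩ | ⟨u, rfl⟩ := ValuationRing.dvd_total s p
  · have hu : u ∈ P := (hP.mem_or_mem hp).resolve_left hs
    have hzero : algebraMap S R s * (t - algebraMap S R u * x) = 0 := by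
      rw [mul_sub, hpx, map_mul, mul_assoc, sub_self]
    have hdiff : t - algebraMap S R u * x ∈ Q₀ := by
      refine (hQ₀.2 _ _ fun r => ?_).resolve_left fun h => hs (hQ₀P h)
      rw [Algebra.commutes, mul_assoc, hzero, mul_zero]
      exact Q₀.zero_mem
    have hux : algebraMap S R u * x ∈ Q := by
      rw [Algebra.commutes]
      exact Q.mul_mem_left x (hPQ hu)
    exact ht (by simpa using Q.add_mem (hQ₀Q hdiff) hux)
  · exact hs (P.mul_mem_right u hp)

theorem exists_isPrimeNC_lt_comap_eq [PreValuationRing S] {P : Ideal S} (hP : P.IsPrime)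
    {Q₀ Q : Ideal R} (hQ₀ : IsPrimeNC Q₀) (hQ₀Q : Q₀ ≤ Q)
    (hQ₀P : Q₀.comap (algebraMap S R) ≤ P) (hQ : IsPrimeNC Q)
    (hPQ : P < Q.comap (algebraMap S R)) :
    ∃ Q₁ : Ideal R, IsTwoSidedI Q₁ ∧ IsPrimeNC Q₁ ∧ Q₁ < Q ∧
      Q₁.comap (algebraMap S R) = P := by
  have hts : IsTwoSidedI (P.map (algebraMap S R)) := fun a ha r => by
    obtain ⟨p, hp, x, rfl⟩ := mem_map_algebraMap_iff.mp ha
    exact mem_map_algebraMap_iff.mpr ⟨p, hp, x * r, mul_assoc _ _ _⟩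
  have h1P : (1 : S) ∉ P := (Ideal.ne_top_iff_one P).mp hP.ne_top
  have h1Q : (1 : R) ∉ Q := (Ideal.ne_top_iff_one Q).mp hQ.1
  obtain ⟨Q₁, hPQ₁, hts₁, hQ₁, hdisj⟩ := exists_isPrimeNC_le_of_disjoint
    (isMSystem_complMul hP hQ) ⟨1, 1, h1P, 1, h1Q, by simp⟩ hts
    (disjoint_map_complMul hP hQ₀ hQ₀Q hQ₀P hPQ.le)
  have hQ₁Q : Q₁ ≤ Q := fun t ht => by
    by_contra htQ
    exact Set.disjoint_left.mp hdisj ht ⟨1, h1P, t, htQ, by simp⟩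
  have hcomap : Q₁.comap (algebraMap S R) = P := by
    refine le_antisymm (fun s hs => ?_) (Ideal.map_le_iff_le_comap.mp hPQ₁)
    by_contra hsP
    exact Set.disjoint_left.mp hdisj hs ⟨s, hsP, 1, h1Q, (mul_one _).symm⟩
  refine ⟨Q₁, hts₁, hQ₁, hQ₁Q.lt_of_ne ?_, hcomap⟩
  rintro rfl
  exact hPQ.ne hcomap.symm

end Algebra

/-- Let `S` be a commutative valuation ring (ideals totally ordered
by inclusion, not necessarily a domain) and `R` an `S`-algebra.  Then `R` satisfies
going down over `S` iff every minimal prime ideal of `R` lies over the (unique)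
minimal prime ideal of `S`. -/
theorem stmt10 {S R : Type*} [CommRing S] [Ring R] [Algebra S R]
    (hval : ∀ I J : Ideal S, I ≤ J ∨ J ≤ I) :
    (∀ P₁ P₂ : Ideal S, P₁.IsPrime → P₂.IsPrime → P₁ < P₂ →
        ∀ Q₂ : Ideal R, IsTwoSidedI Q₂ → IsPrimeNC Q₂ →
          Q₂.comap (algebraMap S R) = P₂ →
          ∃ Q₁ : Ideal R, IsTwoSidedI Q₁ ∧ IsPrimeNC Q₁ ∧ Q₁ < Q₂ ∧
            Q₁.comap (algebraMap S R) = P₁) ↔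
      (∀ Q : Ideal R, IsTwoSidedI Q → IsPrimeNC Q →
          (∀ Q' : Ideal R, IsTwoSidedI Q' → IsPrimeNC Q' → Q' ≤ Q → Q' = Q) →
        ∀ P : Ideal S, P.IsPrime → (∀ P' : Ideal S, P'.IsPrime → P' ≤ P → P' = P) →
          Q.comap (algebraMap S R) = P) := by
  constructor
  · intro hGD Q hts hQ hQmin P hP hPmin
    have hQS : (Q.comap (algebraMap S R)).IsPrime := isPrime_comap_of_isPrimeNC hQ
    rcases hval (Q.comap (algebraMap S R)) P with hle | hle
    · exact hPmin _ hQS hle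
    obtain heq | hlt := hle.eq_or_lt
    · exact heq.symm
    obtain ⟨Q₁, hts₁, hQ₁, hQ₁Q, -⟩ := hGD P _ hP hQS hlt Q hts hQ rfl
    exact absurd (hQmin Q₁ hts₁ hQ₁ hQ₁Q.le) hQ₁Q.ne
  · intro hMin P₁ P₂ hP₁ _ hlt Q₂ hts₂ hQ₂ hQ₂P₂
    have : PreValuationRing S := PreValuationRing.iff_ideal_total.mpr ⟨hval⟩
    obtain ⟨P₀, hP₀, hP₀P₁⟩ := Ideal.exists_minimalPrimes_le (bot_le : ⊥ ≤ P₁)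
    obtain ⟨Q₀, hQ₀Q₂, ⟨hts₀, hQ₀⟩, hQ₀min⟩ := exists_minimal_isPrimeNC_le hts₂ hQ₂
    have hQ₀P₀ : Q₀.comap (algebraMap S R) = P₀ :=
      hMin Q₀ hts₀ hQ₀ (fun _ h₁ h₂ hle => le_antisymm hle (hQ₀min ⟨h₁, h₂⟩ hle)) P₀ hP₀.1.1
        fun _ h hle => le_antisymm hle (hP₀.2 ⟨h, bot_le⟩ hle)
    exact exists_isPrimeNC_lt_comap_eq hP₁ hQ₀ hQ₀Q₂ (hQ₀P₀ ▸ hP₀P₁) hQ₂ (hQ₂P₂ ▸ hlt)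
end

section
/- Let S and R be rings (not necessarily commutative) and f : S → R a ring homomorphism (not necessarily unital) with f(S) contained in the center of R. Then f satisfies strong going between (SGB) if and only if for every prime ideal Q of R, the induced map S/f⁻¹(Q) → R/Q satisfies going down. -/
/-- The preimage `f⁻¹(Q)` of an ideal along a (not necessarily unital) ring
homomorphism, as an ideal. -/
def preimageIdeal {S R : Type*} [Ring S] [Ring R] (f : S →ₙ+* R) (Q : Ideal R) :
    Ideal S where
  carrier := f ⁻¹' Q
  add_mem' ha hb := by
    simp only [Set.mem_preimage, map_add] at *
    exact Q.add_mem ha hb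
  zero_mem' := by simp only [Set.mem_preimage, map_zero]; exact Q.zero_mem
  smul_mem' c x hx := by
    simp only [Set.mem_preimage, smul_eq_mul, map_mul] at *
    exact Q.mul_mem_left _ hx

section Preimage

variable {S R : Type*} [Ring S] [Ring R] (f : S →ₙ+* R)

theorem mem_preimageIdeal {Q : Ideal R} {x : S} : x ∈ preimageIdeal f Q ↔ f x ∈ Q :=
  Iff.rfl

theorem lt_of_le_of_preimageIdeal_lt {Q Q' : Ideal R} (hle : Q ≤ Q')
    (hlt : preimageIdeal f Q < preimageIdeal f Q') : Q < Q' :=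
  lt_of_le_of_ne hle (ne_of_apply_ne (preimageIdeal f) hlt.ne)

theorem IsTwoSidedI.preimageIdeal {Q : Ideal R} (hQ : IsTwoSidedI Q) :
    IsTwoSidedI (preimageIdeal f Q) := fun a ha r => by
  rw [mem_preimageIdeal, map_mul]
  exact hQ _ ha _

end Preimage

theorem IsPrimeNC.mem_or_mem_of_mul_mem_of_mem_center {R : Type*} [Ring R] {Q : Ideal R}
    (hQ : IsPrimeNC Q) {a b : R} (ha : a ∈ Set.center R) (hab : a * b ∈ Q) :
    a ∈ Q ∨ b ∈ Q :=
  hQ.2 a b fun r => by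
    rw [ha.comm r, mul_assoc]
    exact Q.mul_mem_left r hab

theorem IsPrimeNC.preimageIdeal {S R : Type*} [Ring S] [Ring R] {f : S →ₙ+* R}
    (hcentral : ∀ s : S, f s ∈ Set.center R) {Q : Ideal R} (hQ : IsPrimeNC Q)
    (hne : preimageIdeal f Q ≠ ⊤) : IsPrimeNC (preimageIdeal f Q) := by
  refine ⟨hne, fun x y h => ?_⟩
  have hsq : f (x * y) * f (x * y) ∈ Q := by
    have := h (y * x)
    rwa [mem_preimageIdeal, show x * (y * x) * y = x * y * (x * y) by noncomm_ring,
      map_mul] at this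
  have hxy : f (x * y) ∈ Q :=
    (hQ.mem_or_mem_of_mul_mem_of_mem_center (hcentral _) hsq).elim id id
  rw [map_mul] at hxy
  exact hQ.mem_or_mem_of_mul_mem_of_mem_center (hcentral x) hxy

section GoingBetween

variable {S R : Type*} [Ring S] [Ring R]

def StrongGoingBetween (f : S →ₙ+* R) : Prop :=
  ∀ P₁ P₂ P₃ : Ideal S, IsTwoSidedI P₁ → IsPrimeNC P₁ → IsTwoSidedI P₂ → IsPrimeNC P₂ →
    IsTwoSidedI P₃ → IsPrimeNC P₃ → P₁ < P₂ → P₂ < P₃ →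
    ∀ Q₁ Q₃ : Ideal R, IsTwoSidedI Q₁ → IsPrimeNC Q₁ → IsTwoSidedI Q₃ → IsPrimeNC Q₃ →
      Q₁ < Q₃ → preimageIdeal f Q₁ = P₁ → preimageIdeal f Q₃ = P₃ →
      ∃ Q₂ : Ideal R, IsTwoSidedI Q₂ ∧ IsPrimeNC Q₂ ∧ Q₁ < Q₂ ∧ Q₂ < Q₃ ∧
        preimageIdeal f Q₂ = P₂

/-- Going down for every induced map `S/f⁻¹(Q) → R/Q`, with the primes of `R/Q` and of
`S/f⁻¹(Q)` read as the primes containing `Q` and `f⁻¹(Q)`. -/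
def GoingDownOnQuotients (f : S →ₙ+* R) : Prop :=
  ∀ Q : Ideal R, IsTwoSidedI Q → IsPrimeNC Q →
    ∀ P₁ P₂ : Ideal S, IsTwoSidedI P₁ → IsPrimeNC P₁ → IsTwoSidedI P₂ → IsPrimeNC P₂ →
      preimageIdeal f Q ≤ P₁ → P₁ < P₂ →
      ∀ Q₂ : Ideal R, IsTwoSidedI Q₂ → IsPrimeNC Q₂ → Q ≤ Q₂ →
        preimageIdeal f Q₂ = P₂ →
        ∃ Q₁ : Ideal R, IsTwoSidedI Q₁ ∧ IsPrimeNC Q₁ ∧ Q ≤ Q₁ ∧ Q₁ < Q₂ ∧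
          preimageIdeal f Q₁ = P₁

/-- If `f⁻¹(Q) = P₁` then `Q` itself lies over `P₁`; otherwise `f⁻¹(Q) < P₁ < P₂` is a chain
of primes, because `f⁻¹(Q)` is prime when `f` has central image, and SGB applies to it. -/
theorem StrongGoingBetween.goingDownOnQuotients {f : S →ₙ+* R}
    (hcentral : ∀ s : S, f s ∈ Set.center R) (hf : StrongGoingBetween f) :
    GoingDownOnQuotients f := by
  intro Q hQ hQp P₁ P₂ _ hP₁p _ _ hQP₁ hP₁₂ Q₂ hQ₂ hQ₂p hQQ₂ rfl
  rcases hQP₁.eq_or_lt with rfl | hlt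
  · exact ⟨Q, hQ, hQp, le_rfl, lt_of_le_of_preimageIdeal_lt f hQQ₂ hP₁₂, rfl⟩
  · have hne : preimageIdeal f Q ≠ ⊤ := (hlt.trans_le le_top).ne
    obtain ⟨Q₁, hQ₁, hQ₁p, hQQ₁, hQ₁Q₂, rfl⟩ :=
      hf _ P₁ _ (hQ.preimageIdeal f) (hQp.preimageIdeal hcentral hne) ‹_› hP₁p ‹_› ‹_› hlt hP₁₂
        Q Q₂ hQ hQp hQ₂ hQ₂p (lt_of_le_of_preimageIdeal_lt f hQQ₂ (hlt.trans hP₁₂)) rfl rfl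
    exact ⟨Q₁, hQ₁, hQ₁p, hQQ₁.le, hQ₁Q₂, rfl⟩

theorem GoingDownOnQuotients.strongGoingBetween {f : S →ₙ+* R} (hf : GoingDownOnQuotients f) :
    StrongGoingBetween f := by
  intro P₁ P₂ P₃ _ _ hP₂ hP₂p hP₃ hP₃p hP₁₂ hP₂₃ Q₁ Q₃ hQ₁ hQ₁p hQ₃ hQ₃p hQ₁₃ hpre₁ hpre₃
  subst hpre₁ hpre₃
  obtain ⟨Q₂, hQ₂, hQ₂p, hQ₁₂, hQ₂₃, rfl⟩ :=
    hf Q₁ hQ₁ hQ₁p P₂ _ hP₂ hP₂p hP₃ hP₃p hP₁₂.le hP₂₃ Q₃ hQ₃ hQ₃p hQ₁₃.le rfl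
  exact ⟨Q₂, hQ₂, hQ₂p, lt_of_le_of_preimageIdeal_lt f hQ₁₂ hP₁₂, hQ₂₃, rfl⟩

end GoingBetween

/-- Let `S`, `R` be rings and `f : S → R` a (not necessarily
unital) homomorphism with central image.  Then `f` satisfies strong going between
(SGB) iff for every prime `Q` of `R` the induced map `S/f⁻¹(Q) → R/Q` satisfies
going down (expressed via the correspondence between primes of the quotients and
primes containing `Q`, resp. `f⁻¹(Q)`). -/
theorem stmt11 {S R : Type*} [Ring S] [Ring R] (f : S →ₙ+* R)
    (hcentral : ∀ s : S, f s ∈ Set.center R) :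
    (∀ P₁ P₂ P₃ : Ideal S, IsTwoSidedI P₁ → IsPrimeNC P₁ → IsTwoSidedI P₂ → IsPrimeNC P₂ →
        IsTwoSidedI P₃ → IsPrimeNC P₃ → P₁ < P₂ → P₂ < P₃ →
        ∀ Q₁ Q₃ : Ideal R, IsTwoSidedI Q₁ → IsPrimeNC Q₁ → IsTwoSidedI Q₃ → IsPrimeNC Q₃ →
          Q₁ < Q₃ → preimageIdeal f Q₁ = P₁ → preimageIdeal f Q₃ = P₃ →
          ∃ Q₂ : Ideal R, IsTwoSidedI Q₂ ∧ IsPrimeNC Q₂ ∧ Q₁ < Q₂ ∧ Q₂ < Q₃ ∧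
            preimageIdeal f Q₂ = P₂) ↔
      (∀ Q : Ideal R, IsTwoSidedI Q → IsPrimeNC Q →
        ∀ P₁ P₂ : Ideal S, IsTwoSidedI P₁ → IsPrimeNC P₁ → IsTwoSidedI P₂ → IsPrimeNC P₂ →
          preimageIdeal f Q ≤ P₁ → P₁ < P₂ →
          ∀ Q₂ : Ideal R, IsTwoSidedI Q₂ → IsPrimeNC Q₂ → Q ≤ Q₂ →
            preimageIdeal f Q₂ = P₂ →
            ∃ Q₁ : Ideal R, IsTwoSidedI Q₁ ∧ IsPrimeNC Q₁ ∧ Q ≤ Q₁ ∧ Q₁ < Q₂ ∧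
              preimageIdeal f Q₁ = P₁) :=
  show StrongGoingBetween f ↔ GoingDownOnQuotients f from
    ⟨StrongGoingBetween.goingDownOnQuotients hcentral, GoingDownOnQuotients.strongGoingBetween⟩
end

section
/- Let S be a commutative ring, R an S-algebra, P₀ ⊆ P₁ prime ideals of S, and I₀ a two-sided ideal of R lying over P₀. Then the ideal I₀ + P₁R lies over P₁ (i.e., its contraction to S equals P₁) if and only if there exists a prime ideal Q₁ of R containing I₀ with Q₁ ∩ S = P₁. -/
/-!
Among the two-sided ideals of `R` containing `I₀ + P₁R` whose contraction stays inside `P₁`,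
Zorn's lemma gives a maximal one `Q`, and its contraction is exactly `P₁` when that of
`I₀ + P₁R` is. `Q` is prime: if `x R y ⊆ Q` with `x, y ∉ Q`, the colon ideal `Q : Ry`
strictly contains `Q`, so by maximality it contains the image of some `s ∉ P₁`; then
`y R s ⊆ Q` since the image of `S` is central, and the same argument yields `t ∉ P₁`
with `ts ∈ P₁`.
-/

lemma isTwoSidedI_iff {R : Type*} [Ring R] {I : Ideal R} : IsTwoSidedI I ↔ I.IsTwoSided :=
  ⟨fun h ↦ ⟨fun r ha ↦ h _ ha r⟩, fun _ _ ha r ↦ I.mul_mem_right r ha⟩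

namespace Ideal

variable {R : Type*} [Semiring R]

instance isTwoSided_sup (I J : Ideal R) [I.IsTwoSided] [J.IsTwoSided] : (I ⊔ J).IsTwoSided where
  mul_mem_of_left r h := by
    obtain ⟨a, ha, b, hb, rfl⟩ := Submodule.mem_sup.mp h
    rw [add_mul]
    exact add_mem (mem_sup_left (I.mul_mem_right r ha)) (mem_sup_right (J.mul_mem_right r hb))

lemma isTwoSided_span_of_subset_center {s : Set R} (hs : s ⊆ Set.center R) :
    (span s).IsTwoSided where
  mul_mem_of_left r h := by
    induction h using Submodule.span_induction with
    | mem z hz =>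
      rw [← Semigroup.mem_center_iff.mp (hs hz) r]
      exact mul_mem_left _ r (subset_span hz)
    | zero => simp
    | add a b _ _ ha hb => simpa [add_mul] using add_mem ha hb
    | smul c a _ ha => simpa [mul_assoc] using mul_mem_left _ c ha

instance isTwoSided_map_algebraMap {S : Type*} [CommSemiring S] [Algebra S R] (P : Ideal S) :
    (P.map (algebraMap S R)).IsTwoSided :=
  isTwoSided_span_of_subset_center (by
    rintro _ ⟨s, -, rfl⟩
    exact Set.algebraMap_mem_center s)

lemma exists_le_maximal_isTwoSided_comap_le {S F : Type*} [Semiring S] [FunLike F S R]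
    [RingHomClass F S R] (f : F) {P : Ideal S} {J : Ideal R} [J.IsTwoSided]
    (hJ : J.comap f ≤ P) :
    ∃ Q, J ≤ Q ∧ Maximal (fun Q : Ideal R ↦ Q.IsTwoSided ∧ Q.comap f ≤ P) Q := by
  refine zorn_le_nonempty₀ {Q | Q.IsTwoSided ∧ Q.comap f ≤ P} ?_ J
    ⟨inferInstanceAs J.IsTwoSided, hJ⟩
  intro c hc hchain Q₀ hQ₀
  have mem_sSup {x : R} : x ∈ sSup c ↔ ∃ Q ∈ c, x ∈ Q :=
    Submodule.mem_sSup_of_directed ⟨Q₀, hQ₀⟩ hchain.directedOn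
  refine ⟨sSup c, ⟨⟨fun r hx ↦ ?_⟩, fun s hs ↦ ?_⟩, fun Q hQ ↦ le_sSup hQ⟩
  · obtain ⟨Q, hQc, hxQ⟩ := mem_sSup.mp hx
    have := (hc hQc).1
    exact mem_sSup.mpr ⟨Q, hQc, Q.mul_mem_right r hxQ⟩
  · obtain ⟨Q, hQc, hsQ⟩ := mem_sSup.mp hs
    exact (hc hQc).2 hsQ

end Ideal

section MaximalContraction

variable {S R : Type*} [CommRing S] [Ring R] [Algebra S R] {P : Ideal S} {Q : Ideal R}

lemma exists_algebraMap_mul_mem_of_maximal_comap_le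
    (hQ : Maximal (fun Q : Ideal R ↦ Q.IsTwoSided ∧ Q.comap (algebraMap S R) ≤ P) Q)
    {x y : R} (hxy : ∀ r, x * r * y ∈ Q) (hx : x ∉ Q) :
    ∃ s ∉ P, algebraMap S R s * y ∈ Q := by
  have := hQ.prop.1
  set C := Q.colon (Ideal.span {y} : Set R)
  have hxC : x ∈ C := Submodule.mem_colon.mpr fun _ hp ↦ by
    obtain ⟨r, rfl⟩ := Ideal.mem_span_singleton'.mp hp
    simpa [mul_assoc] using hxy r
  have hQC : Q < C := lt_of_le_of_ne Ideal.le_colon fun h ↦ hx (h ▸ hxC)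
  have hCP : ¬ C.comap (algebraMap S R) ≤ P := fun h ↦
    hQ.not_prop_of_gt hQC ⟨inferInstance, h⟩
  obtain ⟨s, hsC, hsP⟩ := Set.not_subset.mp hCP
  exact ⟨s, hsP, Submodule.mem_colon.mp hsC y (Ideal.mem_span_singleton_self y)⟩

lemma isPrimeNC_of_maximal_comap_le [P.IsPrime]
    (hQ : Maximal (fun Q : Ideal R ↦ Q.IsTwoSided ∧ Q.comap (algebraMap S R) ≤ P) Q) :
    IsPrimeNC Q := by
  have := hQ.prop.1
  refine ⟨fun hQtop ↦ Ideal.IsPrime.ne_top' (I := P) ?_, fun x y hxy ↦ ?_⟩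
  · simpa [hQtop] using hQ.prop.2
  by_contra! ⟨hx, hy⟩
  obtain ⟨s, hsP, hsy⟩ := exists_algebraMap_mul_mem_of_maximal_comap_le hQ hxy hx
  have hys (r : R) : y * r * algebraMap S R s ∈ Q := by
    rw [mul_assoc, ← Algebra.commutes, ← mul_assoc, ← Algebra.commutes]
    exact Q.mul_mem_right r hsy
  obtain ⟨t, htP, hty⟩ := exists_algebraMap_mul_mem_of_maximal_comap_le hQ hys hy
  have hts : t * s ∈ P := hQ.prop.2 (by simpa using hty)
  exact (Ideal.IsPrime.mem_or_mem ‹_› hts).elim htP hsP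

end MaximalContraction

theorem stmt13_general {S R : Type*} [CommRing S] [Ring R] [Algebra S R]
    (P₁ : Ideal S) (hP₁ : P₁.IsPrime)
    (I₀ : Ideal R) (hI₀ts : IsTwoSidedI I₀) :
    (I₀ + Ideal.map (algebraMap S R) P₁).comap (algebraMap S R) = P₁ ↔
      ∃ Q₁ : Ideal R, IsTwoSidedI Q₁ ∧ IsPrimeNC Q₁ ∧ I₀ ≤ Q₁ ∧
        Q₁.comap (algebraMap S R) = P₁ := by
  have := isTwoSidedI_iff.mp hI₀ts
  rw [Submodule.add_eq_sup]
  constructor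
  · intro hJ
    obtain ⟨Q, hJQ, hQ⟩ := Ideal.exists_le_maximal_isTwoSided_comap_le (algebraMap S R) hJ.le
    refine ⟨Q, isTwoSidedI_iff.mpr hQ.prop.1, isPrimeNC_of_maximal_comap_le hQ,
      le_sup_left.trans hJQ, hQ.prop.2.antisymm ?_⟩
    exact hJ.ge.trans (Ideal.comap_mono hJQ)
  · rintro ⟨Q₁, -, -, hIQ, hQP⟩
    refine le_antisymm ((Ideal.comap_mono ?_).trans hQP.le) ?_
    · exact sup_le hIQ (Ideal.map_le_iff_le_comap.mpr hQP.ge)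
    · exact Ideal.le_comap_map.trans (Ideal.comap_mono le_sup_right)

/-- Let `S` be a commutative ring, `R` an `S`-algebra,
`P₀ ⊆ P₁` primes of `S` and `I₀` a two-sided ideal of `R` lying over `P₀`.
Then `I₀ + P₁R` lies over `P₁` iff there is a prime ideal `Q₁ ⊇ I₀` of `R`
with `Q₁ ∩ S = P₁`. -/
theorem stmt13 {S R : Type*} [CommRing S] [Ring R] [Algebra S R]
    (P₀ P₁ : Ideal S) (hP₀ : P₀.IsPrime) (hP₁ : P₁.IsPrime) (hle : P₀ ≤ P₁)
    (I₀ : Ideal R) (hI₀ts : IsTwoSidedI I₀)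
    (hover₀ : I₀.comap (algebraMap S R) = P₀) :
    (I₀ + Ideal.map (algebraMap S R) P₁).comap (algebraMap S R) = P₁ ↔
      ∃ Q₁ : Ideal R, IsTwoSidedI Q₁ ∧ IsPrimeNC Q₁ ∧ I₀ ≤ Q₁ ∧
        Q₁.comap (algebraMap S R) = P₁ :=
  stmt13_general P₁ hP₁ I₀ hI₀ts
end

section
/- Let S be a commutative local ring and R an S-algebra which is finitely generated as an S-module. Then R satisfies going up (GU) over S: for prime ideals P₀ ⊆ P₁ of S and a prime ideal Q₀ of R lying over P₀, there exists a prime ideal Q₁ ⊇ Q₀ of R lying over P₁. -/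
open Polynomial

namespace Ideal.IsPrime

variable {S : Type*} [CommRing S] {P : Ideal S}

theorem mem_of_aeval_mem_of_monic (hP : P.IsPrime) {p : S[X]} (hp : p.Monic)
    (hcoeff : ∀ i < p.natDegree, p.coeff i ∈ P) {s : S} (h : aeval s p ∈ P) : s ∈ P := by
  have hsum : ∑ i ∈ Finset.range p.natDegree, p.coeff i * s ^ i ∈ P :=
    P.sum_mem fun i hi => P.mul_mem_right _ (hcoeff i (Finset.mem_range.mp hi))
  have hexpand :
      aeval s p = s ^ p.natDegree + ∑ i ∈ Finset.range p.natDegree, p.coeff i * s ^ i := by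
    conv_lhs => rw [hp.as_sum]
    simp [eval_finsetSum]
  refine hP.mem_of_pow_mem p.natDegree ?_
  simpa [hexpand] using P.sub_mem h hsum

/-- Cayley–Hamilton for the scalar endomorphism `s` of a finite module. -/
theorem mem_of_smul_mem_smul_top {M : Type*} [AddCommGroup M] [Module S M] [Module.Finite S M]
    (hP : P.IsPrime) (hann : Module.annihilator S M ≤ P) {s : S}
    (hs : ∀ m : M, s • m ∈ P • (⊤ : Submodule S M)) : s ∈ P := by
  obtain ⟨p, hp, -, hcoeff, hzero⟩ :=
    LinearMap.exists_monic_and_natDegree_eq_and_coeff_mem_pow_and_aeval_eq_zero S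
      (algebraMap S (Module.End S M) s) P (by rintro _ ⟨m, rfl⟩; exact hs m)
  refine hP.mem_of_aeval_mem_of_monic hp
    (fun i hi => Ideal.pow_le_self (Nat.sub_ne_zero_of_lt hi) (hcoeff i)) (hann ?_)
  rw [aeval_algebraMap_apply] at hzero
  exact Module.mem_annihilator.mpr fun m => by simpa using congr($hzero m)

end Ideal.IsPrime

section TwoSided

variable {R : Type*} [Ring R]

theorem IsTwoSidedI.sup {I J : Ideal R} (hI : IsTwoSidedI I) (hJ : IsTwoSidedI J) :
    IsTwoSidedI (I ⊔ J) := by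
  intro a ha r
  obtain ⟨b, hb, c, hc, rfl⟩ := Submodule.mem_sup.mp ha
  rw [add_mul]
  exact Submodule.add_mem_sup (hI b hb r) (hJ c hc r)

theorem IsTwoSidedI.isTwoSided {I : Ideal R} (hI : IsTwoSidedI I) : I.IsTwoSided :=
  ⟨fun b ha => hI _ ha b⟩

theorem isTwoSidedI_span_range_mul (x : R) : IsTwoSidedI (Ideal.span (Set.range (x * ·))) := by
  intro a ha r
  induction ha using Submodule.span_induction with
  | mem y hy =>
    obtain ⟨b, rfl⟩ := hy
    exact Ideal.subset_span ⟨b * r, (mul_assoc _ _ _).symm⟩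
  | zero => simp
  | add u v _ _ hu hv => simpa [add_mul] using Ideal.add_mem _ hu hv
  | smul c u _ hu => simpa [smul_eq_mul, mul_assoc] using Ideal.mul_mem_left _ c hu

theorem mem_span_range_mul_self (x : R) : x ∈ Ideal.span (Set.range (x * ·)) :=
  Ideal.subset_span ⟨1, mul_one x⟩

theorem mul_mem_of_mem_sup_span_range_mul {Q : Ideal R} (hQ : IsTwoSidedI Q) {x y : R}
    (hxy : ∀ r, x * r * y ∈ Q) {u v : R} (hu : u ∈ Q ⊔ Ideal.span (Set.range (x * ·)))
    (hv : v ∈ Q ⊔ Ideal.span (Set.range (y * ·))) : u * v ∈ Q := by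
  have := hQ.isTwoSided
  have := (isTwoSidedI_span_range_mul x).isTwoSided
  have hspan : Ideal.span (Set.range (x * ·)) * Ideal.span (Set.range (y * ·)) ≤ Q := by
    rw [Ideal.span_mul_span, Ideal.span_le]
    rintro _ ⟨_, ⟨a, rfl⟩, _, ⟨b, rfl⟩, rfl⟩
    simpa only [← mul_assoc, SetLike.mem_coe] using hQ _ (hxy a) b
  refine (?_ : _ * _ ≤ Q) (Ideal.mul_mem_mul hu hv)
  simp only [Ideal.sup_mul, Ideal.mul_sup, sup_le_iff]
  exact ⟨⟨Ideal.mul_le_right, Ideal.mul_le_right⟩, Ideal.mul_le_left, hspan⟩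

end TwoSided

section Algebra

variable {S R : Type*} [CommRing S] [Ring R] [Algebra S R]

theorem isTwoSidedI_map_algebraMap (P : Ideal S) : IsTwoSidedI (P.map (algebraMap S R)) := by
  intro a ha r
  induction ha using Submodule.span_induction with
  | mem w hw =>
    obtain ⟨p, hp, rfl⟩ := hw
    rw [Algebra.commutes]
    exact Ideal.mul_mem_left _ r (Ideal.mem_map_of_mem _ hp)
  | zero => simp
  | add u v _ _ hu hv => simpa [add_mul] using Ideal.add_mem _ hu hv
  | smul c w _ h => simpa [smul_eq_mul, mul_assoc] using Ideal.mul_mem_left _ c h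

theorem mul_mem_smul_top_of_mem_map {P : Ideal S} {z : R} (hz : z ∈ P.map (algebraMap S R))
    (a r : R) : a * z * r ∈ P • (⊤ : Submodule S R) := by
  induction hz using Submodule.span_induction generalizing a with
  | mem w hw =>
    obtain ⟨p, hp, rfl⟩ := hw
    rw [← Algebra.commutes, mul_assoc, ← Algebra.smul_def]
    exact Submodule.smul_mem_smul hp trivial
  | zero => simp
  | add u v _ _ hu hv => simpa [mul_add, add_mul] using add_mem (hu a) (hv a)
  | smul c w _ h => simpa [smul_eq_mul, mul_assoc] using h (a * c)

theorem comap_sup_map_le_of_comap_le [Module.Finite S R] {P : Ideal S} (hP : P.IsPrime)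
    {Q : Ideal R} (hQ : IsTwoSidedI Q) (hQP : Q.comap (algebraMap S R) ≤ P) :
    (Q ⊔ P.map (algebraMap S R)).comap (algebraMap S R) ≤ P := by
  intro s hs
  set N : Submodule S R := Q.restrictScalars S
  refine hP.mem_of_smul_mem_smul_top (M := R ⧸ N) (fun a ha => hQP ?_) fun m => ?_
  · have h1 := Module.mem_annihilator.mp ha (N.mkQ 1)
    rwa [← map_smul, Submodule.mkQ_apply, Submodule.Quotient.mk_eq_zero, Algebra.smul_def,
      mul_one] at h1
  · obtain ⟨r, rfl⟩ := N.mkQ_surjective m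
    obtain ⟨q, hq, z, hz, hqz⟩ := Submodule.mem_sup.mp hs
    have hqr : N.mkQ (q * r) = 0 := (Submodule.Quotient.mk_eq_zero N).mpr (hQ q hq r)
    have hzr : N.mkQ (z * r) ∈ P • (⊤ : Submodule S (R ⧸ N)) := by
      have hzr' : z * r ∈ P • (⊤ : Submodule S R) := by
        simpa using mul_mem_smul_top_of_mem_map hz 1 r
      have := Submodule.mem_map_of_mem (f := N.mkQ) hzr'
      rw [Submodule.map_smul''] at this
      exact Submodule.smul_mono le_rfl le_top this
    rwa [← map_smul, Algebra.smul_def, ← hqz, add_mul, map_add, hqr, zero_add]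

end Algebra

section Zorn

variable {S R : Type*} [CommRing S] [Ring R] [Algebra S R]

def IsTwoSidedComapLE (P : Ideal S) (K : Ideal R) : Prop :=
  IsTwoSidedI K ∧ K.comap (algebraMap S R) ≤ P

theorem exists_le_maximal_isTwoSidedComapLE {P : Ideal S} {J : Ideal R}
    (hJ : IsTwoSidedComapLE P J) : ∃ Q, J ≤ Q ∧ Maximal (IsTwoSidedComapLE P) Q := by
  refine zorn_le_nonempty₀ {K | IsTwoSidedComapLE P K} (fun c hc hchain y hy => ?_) J hJ
  have hmem {a : R} (ha : a ∈ sSup c) : ∃ K ∈ c, a ∈ K :=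
    (Submodule.mem_sSup_of_directed ⟨y, hy⟩ hchain.directedOn).mp ha
  refine ⟨sSup c, ⟨?_, ?_⟩, fun _ => le_sSup⟩
  · intro a ha r
    obtain ⟨K, hK, haK⟩ := hmem ha
    exact le_sSup hK ((hc hK).1 a haK r)
  · intro s hs
    obtain ⟨K, hK, hsK⟩ := hmem hs
    exact (hc hK).2 hsK

variable {P : Ideal S} {Q : Ideal R}

theorem Maximal.exists_algebraMap_mem_of_lt (hQ : Maximal (IsTwoSidedComapLE P) Q)
    {K : Ideal R} (hK : IsTwoSidedI K) (hQK : Q < K) : ∃ s ∉ P, algebraMap S R s ∈ K := by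
  by_contra! h
  exact hQK.not_ge (hQ.2 ⟨hK, fun s hs => by_contra fun hsP => h s hsP hs⟩ hQK.le)

theorem Maximal.isPrimeNC (hP : P.IsPrime) (hQ : Maximal (IsTwoSidedComapLE P) Q) :
    IsPrimeNC Q := by
  refine ⟨fun htop => hP.ne_top ((Ideal.eq_top_iff_one P).mpr (hQ.1.2 (by simp [htop]))), ?_⟩
  intro x y hxy
  by_contra! hxyQ
  have henlarge : ∀ w ∉ Q, ∃ s ∉ P, algebraMap S R s ∈ Q ⊔ Ideal.span (Set.range (w * ·)) :=
    fun w hw => hQ.exists_algebraMap_mem_of_lt (hQ.1.1.sup (isTwoSidedI_span_range_mul w)) <|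
      lt_of_le_of_ne le_sup_left fun h => hw (h ▸ Ideal.mem_sup_right (mem_span_range_mul_self w))
  obtain ⟨s, hsP, hs⟩ := henlarge x hxyQ.1
  obtain ⟨t, htP, ht⟩ := henlarge y hxyQ.2
  have hst : s * t ∈ P := hQ.1.2 (by
    simpa using mul_mem_of_mem_sup_span_range_mul hQ.1.1 hxy hs ht)
  exact (hP.mem_or_mem hst).elim hsP htP

end Zorn

theorem stmt15_general {S R : Type*} [CommRing S] [Ring R]
    [Algebra S R] [Module.Finite S R]
    (P₀ P₁ : Ideal S) (hP₁ : P₁.IsPrime) (hle : P₀ ≤ P₁)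
    (Q₀ : Ideal R) (hQ₀ts : IsTwoSidedI Q₀)
    (hover₀ : Q₀.comap (algebraMap S R) = P₀) :
    ∃ Q₁ : Ideal R, IsTwoSidedI Q₁ ∧ IsPrimeNC Q₁ ∧ Q₀ ≤ Q₁ ∧
      Q₁.comap (algebraMap S R) = P₁ := by
  obtain ⟨Q₁, hQ₀Q₁, hmax⟩ :=
    exists_le_maximal_isTwoSidedComapLE (P := P₁) ⟨hQ₀ts, hover₀.trans_le hle⟩
  obtain ⟨hQ₁ts, hQ₁P₁⟩ := hmax.1
  have hsup : Q₁ ⊔ P₁.map (algebraMap S R) ≤ Q₁ :=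
    hmax.2 ⟨hQ₁ts.sup (isTwoSidedI_map_algebraMap P₁),
      comap_sup_map_le_of_comap_le hP₁ hQ₁ts hQ₁P₁⟩ le_sup_left
  refine ⟨Q₁, hQ₁ts, hmax.isPrimeNC hP₁, hQ₀Q₁, le_antisymm hQ₁P₁ ?_⟩
  exact Ideal.map_le_iff_le_comap.mp (le_sup_right.trans hsup)

/-- **GU.** Let `S` be a commutative local ring and `R` an `S`-algebra
finitely generated as an `S`-module.  For primes `P₀ ⊆ P₁` of `S` and a prime `Q₀`
of `R` lying over `P₀`, there is a prime `Q₁ ⊇ Q₀` of `R` lying over `P₁`. -/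
theorem stmt15 {S R : Type*} [CommRing S] [IsLocalRing S] [Ring R]
    [Algebra S R] [Module.Finite S R]
    (P₀ P₁ : Ideal S) (hP₀ : P₀.IsPrime) (hP₁ : P₁.IsPrime) (hle : P₀ ≤ P₁)
    (Q₀ : Ideal R) (hQ₀ts : IsTwoSidedI Q₀) (hQ₀ : IsPrimeNC Q₀)
    (hover₀ : Q₀.comap (algebraMap S R) = P₀) :
    ∃ Q₁ : Ideal R, IsTwoSidedI Q₁ ∧ IsPrimeNC Q₁ ∧ Q₀ ≤ Q₁ ∧
      Q₁.comap (algebraMap S R) = P₁ :=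
  stmt15_general P₀ P₁ hP₁ hle Q₀ hQ₀ts hover₀
end
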